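/- arXiv:1810.08510 — 2 statements merged into one kernel-verified Lean document; each statement's English description precedes it below -/
import Mathlib

section
/- Let q, k, δ, κ, r be positive integers with q ≥ 2, k ≥ 1, δ ≥ 1, and 1 ≤ κ ≤ r, and let b = (k−1) − (⌈k/κ⌉ − 1)·κ (so 0 ≤ b < κ). Then, as integers, ⌈k/κ⌉·G_q(κ,δ) − G_q(κ−b,δ) ≥ (k−1) + (⌈k/r⌉ − 1)·(δ−1). (Consequently, for locally repairable codes the Singleton-type bound d ≤ n − ⌈k/κ⌉·G_q(κ,δ) + G_q(κ−b,δ) is at least as strong as the bound d ≤ n − k + 1 − (⌈k/r⌉ − 1)(δ−1).) -/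
/-!
Write `k - 1 = aκ + b` with `0 ≤ b < κ`, so that `⌈k/κ⌉ = a + 1` and `⌈k/r⌉ - 1 = ⌊(k-1)/r⌋ ≤ a`.
Every summand `⌈δ/q^i⌉` of a Griesmer function is at least `1` and the first one is `δ`, hence
`G(κ) ≥ G(κ - b) + b` and `G(κ) ≥ δ + κ - 1`. Therefore
`(a + 1) G(κ) - G(κ - b) ≥ a (δ + κ - 1) + b = (k - 1) + a (δ - 1)`.
-/

open Finset

/-- Griesmer function `G_q(k,d) = Σ_{i=0}^{k-1} ⌈d / q^i⌉`. -/
def Griesmer (q k d : ℕ) : ℕ := ∑ i ∈ Finset.range k, (d + q ^ i - 1) / q ^ i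

namespace Griesmer

variable {q d : ℕ}

theorem one_le_ceil_div_pow (hq : 0 < q) (hd : 1 ≤ d) (i : ℕ) : 1 ≤ (d + q ^ i - 1) / q ^ i := by
  have hqi : 0 < q ^ i := pow_pos hq i
  rw [Nat.one_le_div_iff hqi]
  omega

theorem add_sub_le (hq : 0 < q) (hd : 1 ≤ d) {m n : ℕ} (hmn : m ≤ n) :
    Griesmer q m d + (n - m) ≤ Griesmer q n d := by
  unfold Griesmer
  rw [range_eq_Ico, range_eq_Ico, ← sum_Ico_consecutive _ (Nat.zero_le m) hmn]
  have hIco : n - m ≤ ∑ i ∈ Ico m n, (d + q ^ i - 1) / q ^ i := by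
    simpa using card_nsmul_le_sum (Ico m n) _ 1 fun i _ => one_le_ceil_div_pow hq hd i
  omega

theorem one (q d : ℕ) : Griesmer q 1 d = d := by
  simp [Griesmer]

theorem add_sub_one_le (hq : 0 < q) (hd : 1 ≤ d) {n : ℕ} (hn : 1 ≤ n) :
    d + (n - 1) ≤ Griesmer q n d := by
  simpa only [one] using add_sub_le hq hd hn

end Griesmer

theorem Nat.add_sub_one_div_eq {k m : ℕ} (hk : 1 ≤ k) (hm : 0 < m) :
    (k + m - 1) / m = (k - 1) / m + 1 := by
  rw [show k + m - 1 = (k - 1) + m by omega, Nat.add_div_right _ hm]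

/-- The new Singleton-type bound is at least as strong as the Prakash et al. bound. -/
theorem stmt_5 {q k δ κ r : ℕ}
    (hq : 2 ≤ q) (hk : 1 ≤ k) (hδ : 1 ≤ δ) (hκ : 1 ≤ κ) (hκr : κ ≤ r) :
    ((k : ℤ) - 1) + (((k + r - 1) / r : ℕ) - 1) * ((δ : ℤ) - 1) ≤
      ((k + κ - 1) / κ : ℕ) * (Griesmer q κ δ : ℤ)
        - (Griesmer q (κ - ((k - 1) - ((k + κ - 1) / κ - 1) * κ)) δ : ℤ) := by
  rw [Nat.add_sub_one_div_eq hk hκ, Nat.add_sub_one_div_eq hk (by omega), Nat.add_sub_cancel,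
    ← Nat.mod_eq_sub_div_mul]
  have hq0 : 0 < q := by omega
  set a := (k - 1) / κ
  set b := (k - 1) % κ
  have hdiv : b + κ * a = k - 1 := Nat.mod_add_div (k - 1) κ
  have hb : b < κ := Nat.mod_lt _ hκ
  have hG_sub : Griesmer q (κ - b) δ + b ≤ Griesmer q κ δ := by
    have := Griesmer.add_sub_le hq0 hδ (Nat.sub_le κ b)
    omega
  have hG_lower : δ + (κ - 1) ≤ Griesmer q κ δ := Griesmer.add_sub_one_le hq0 hδ hκ
  have hra : (k - 1) / r ≤ a := Nat.div_le_div_left hκr hκ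
  have hmul : a * (δ + (κ - 1)) ≤ a * Griesmer q κ δ := Nat.mul_le_mul_left a hG_lower
  have hmul_div : (k - 1) / r * (δ - 1) ≤ a * (δ - 1) := Nat.mul_le_mul_right _ hra
  zify [hk, hδ, hκ] at hdiv hG_sub hmul hmul_div ⊢
  linarith
end

section
/- Let q, κ_a, δ, r be positive integers with q ≥ 2, and set G = G_q(κ_a, δ). Assume G < r + δ − 1 and define the real number δ_t = 1 / (1 + (1/(q−1)) · (1 / (1 − G/(r+δ−1)))). Then for every real number δ_n with δ_n ≥ δ_t, one has (κ_a / G) · (1 − q·δ_n/(q−1)) ≤ (κ_a / (r+δ−1)) · (1 − δ_n). (That is, for relative minimum distances at least δ_t, the Plotkin-combined bound (κ_a/G)(1 − δ_n/(1 − 1/q)) on the rate is at least as strong as the bound (κ_a/(r+δ−1))(1 − δ_n).) -/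
open Finset

lemma griesmer_pos {q k d : ℕ} (hk : 1 ≤ k) (hd : 1 ≤ d) : 1 ≤ Griesmer q k d := by
  unfold Griesmer
  have h0 : 0 ∈ Finset.range k := Finset.mem_range.mpr hk
  have h := Finset.single_le_sum (f := fun i => (d + q ^ i - 1) / q ^ i)
    (fun i _ => Nat.zero_le _) h0
  simp at h
  omega

/-- For relative minimum distances at least `δ_t`, the Plotkin-combined bound
is at least as strong as the Agarwal et al. asymptotic bound. -/
theorem stmt_7 {q κa δ r : ℕ}
    (hq : 2 ≤ q) (hκa : 1 ≤ κa) (hδ : 1 ≤ δ) (hr : 1 ≤ r)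
    (G : ℕ) (hG : G = Griesmer q κa δ)
    (hlt : G < r + δ - 1)
    (δt : ℝ)
    (hδt : δt = 1 / (1 + (1 / ((q : ℝ) - 1)) *
      (1 / (1 - (G : ℝ) / ((r : ℝ) + (δ : ℝ) - 1))))) :
    ∀ δn : ℝ, δt ≤ δn →
      ((κa : ℝ) / (G : ℝ)) * (1 - (q : ℝ) * δn / ((q : ℝ) - 1)) ≤
        ((κa : ℝ) / ((r : ℝ) + (δ : ℝ) - 1)) * (1 - δn) := by
  intro δn hδn
  have hq1 : (1:ℝ) < (q:ℝ) := by
    have : (2:ℝ) ≤ (q:ℝ) := by exact_mod_cast hq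
    linarith
  have hr1 : (1:ℝ) ≤ (r:ℝ) := by exact_mod_cast hr
  have hd1 : (1:ℝ) ≤ (δ:ℝ) := by exact_mod_cast hδ
  set N : ℝ := (r:ℝ) + (δ:ℝ) - 1 with hNdef
  have hN1 : (1:ℝ) ≤ N := by simp only [hNdef]; linarith
  have hGN : (G:ℝ) < N := by
    have h := (Nat.cast_lt (α := ℝ)).mpr hlt
    rw [Nat.cast_sub (by omega), Nat.cast_add] at h
    simpa [hNdef] using h
  clear_value N
  have hG1 : (1:ℝ) ≤ (G:ℝ) := by
    have := griesmer_pos (q := q) hκa hδ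
    rw [hG]; exact_mod_cast this
  have hκ0 : (0:ℝ) ≤ (κa:ℝ) := by positivity
  have hG0 : (0:ℝ) < (G:ℝ) := by linarith
  have hN0 : (0:ℝ) < N := by linarith
  have hq0 : (0:ℝ) < (q:ℝ) - 1 := by linarith
  -- key identity on δt
  have hne1 : (1:ℝ) - (G:ℝ)/N ≠ 0 := by
    have : (0:ℝ) < 1 - (G:ℝ)/N := by
      rw [sub_pos, div_lt_one hN0]; exact hGN
    linarith
  have hdenpos : (0:ℝ) < 1 + (1 / ((q : ℝ) - 1)) * (1 / (1 - (G : ℝ) / N)) := by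
    have h1 : (0:ℝ) < 1 - (G:ℝ)/N := by
      rw [sub_pos, div_lt_one hN0]; exact hGN
    positivity
  have hNG0 : (0:ℝ) < N - (G:ℝ) := by linarith
  have hkey : δt * ((N:ℝ)*q - (G:ℝ)*((q:ℝ)-1)) = (N - (G:ℝ)) * ((q:ℝ)-1) := by
    rw [hδt]
    rw [show (1:ℝ) - (G:ℝ)/N = (N - G)/N by field_simp]
    field_simp
    ring
  have hmulpos : (0:ℝ) < (N:ℝ)*q - (G:ℝ)*((q:ℝ)-1) := by nlinarith
  have hkey2 : (N - (G:ℝ)) * ((q:ℝ)-1) ≤ δn * ((N:ℝ)*q - (G:ℝ)*((q:ℝ)-1)) := by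
    rw [← hkey]
    exact mul_le_mul_of_nonneg_right hδn (le_of_lt hmulpos)
  rw [div_mul_eq_mul_div, div_mul_eq_mul_div, div_le_div_iff₀ hG0 hN0]
  have expand : ((1 - δn) * (G:ℝ)) * ((q:ℝ)-1) - ((1 - (q:ℝ)*δn/((q:ℝ)-1)) * N) * ((q:ℝ)-1)
      = δn * ((N:ℝ)*q - (G:ℝ)*((q:ℝ)-1)) - (N - (G:ℝ)) * ((q:ℝ)-1) := by
    field_simp
    ring
  have hnn : (0:ℝ) ≤ ((1 - δn) * (G:ℝ)) * ((q:ℝ)-1) - ((1 - (q:ℝ)*δn/((q:ℝ)-1)) * N) * ((q:ℝ)-1) := by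
    rw [expand]; linarith
  have hgoal : (κa:ℝ) * ((1 - (q:ℝ)*δn/((q:ℝ)-1)) * N) * ((q:ℝ)-1) ≤
      (κa:ℝ) * ((1 - δn) * (G:ℝ)) * ((q:ℝ)-1) := by
    nlinarith [mul_nonneg hκ0 hnn]
  calc (κa:ℝ) * (1 - (q:ℝ)*δn/((q:ℝ)-1)) * N
      = (κa:ℝ) * ((1 - (q:ℝ)*δn/((q:ℝ)-1)) * N) := by ring
    _ ≤ (κa:ℝ) * ((1-δn) * (G:ℝ)) := le_of_mul_le_mul_right hgoal hq0
    _ = (κa:ℝ) * (1-δn) * (G:ℝ) := by ring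
end
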